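/- Let n be even and let A, B, C, and A⊕B⊕C be bent functions on F_2^n such that additionally AB ⊕ AC ⊕ BC is bent. Then each of the three Rothaus-type functions f, f', f'' on F_2^{n+2} is bent, and moreover f ⊕ f' ⊕ f'' is bent, so f, f', f'' again satisfy the hypotheses of Rothaus' construction. -/

import Mathlib

/-!
Summing out the two new variables, `∑ (-1)^(x₁x₂ + a x₁ + b x₂) = 2 (-1)^(ab)`, so the Walsh
transform of `D ⊕ x₁x₂ ⊕ P x₁ ⊕ Q x₂` at `(u, u₁, u₂)` is twice that of `D ⊕ (P ⊕ u₁)(Q ⊕ u₂)` at `u`.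
For `f` these four functions of `x` are `A`, `B`, `C` and the complement of `A ⊕ B ⊕ C`;
`f'` and `f''` are `f` with `A, B, C` permuted cyclically, and `f ⊕ f' ⊕ f'' = D ⊕ x₁x₂`, whose four
functions are `D` and its complement.
-/

open Finset

/-- Walsh–Hadamard transform of a Boolean function on `F_2^n`. -/
def walsh {n : ℕ} (g : (Fin n → ZMod 2) → ZMod 2) (u : Fin n → ZMod 2) : ℤ :=
  ∑ x : Fin n → ZMod 2, (-1 : ℤ) ^ (g x + ∑ i, u i * x i).val

/-- Bentness: `|W_g(u)| = 2^(n/2)` for all `u`. -/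
def IsBent {n : ℕ} (g : (Fin n → ZMod 2) → ZMod 2) : Prop :=
  ∀ u, |walsh g u| = 2 ^ (n / 2)

/-- Walsh transform of a Boolean function on `F_2^n × F_2 × F_2`. -/
def walsh2 {n : ℕ} (g : (Fin n → ZMod 2) → ZMod 2 → ZMod 2 → ZMod 2)
    (u : Fin n → ZMod 2) (u1 u2 : ZMod 2) : ℤ :=
  ∑ x : Fin n → ZMod 2, ∑ x1 : ZMod 2, ∑ x2 : ZMod 2,
    (-1 : ℤ) ^ (g x x1 x2 + (∑ i, u i * x i) + u1 * x1 + u2 * x2).val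

/-- Bentness on `n+2` variables (`n` even): `|W(u)| = 2^((n+2)/2) = 2^(n/2+1)`. -/
def IsBent2 {n : ℕ} (g : (Fin n → ZMod 2) → ZMod 2 → ZMod 2 → ZMod 2) : Prop :=
  ∀ u u1 u2, |walsh2 g u u1 u2| = 2 ^ (n / 2 + 1)

/-- Walsh transform of a Boolean function on `F_2^n × F_2^4`. -/
def walsh4 {n : ℕ} (g : (Fin n → ZMod 2) → ZMod 2 → ZMod 2 → ZMod 2 → ZMod 2 → ZMod 2)
    (u : Fin n → ZMod 2) (u1 u2 u3 u4 : ZMod 2) : ℤ :=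
  ∑ x : Fin n → ZMod 2, ∑ x1 : ZMod 2, ∑ x2 : ZMod 2, ∑ x3 : ZMod 2, ∑ x4 : ZMod 2,
    (-1 : ℤ) ^ (g x x1 x2 x3 x4 + (∑ i, u i * x i)
      + u1 * x1 + u2 * x2 + u3 * x3 + u4 * x4).val

/-- Bentness on `n+4` variables (`n` even). -/
def IsBent4 {n : ℕ} (g : (Fin n → ZMod 2) → ZMod 2 → ZMod 2 → ZMod 2 → ZMod 2 → ZMod 2) : Prop :=
  ∀ u u1 u2 u3 u4, |walsh4 g u u1 u2 u3 u4| = 2 ^ (n / 2 + 2)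

/-- Walsh transform of a Boolean function on `F_2^n × F_2^m`. -/
def walshP {n m : ℕ} (g : (Fin n → ZMod 2) → (Fin m → ZMod 2) → ZMod 2)
    (u : Fin n → ZMod 2) (v : Fin m → ZMod 2) : ℤ :=
  ∑ x : Fin n → ZMod 2, ∑ y : Fin m → ZMod 2,
    (-1 : ℤ) ^ (g x y + (∑ i, u i * x i) + (∑ j, v j * y j)).val

lemma neg_one_pow_val_add (a b : ZMod 2) :
    (-1 : ℤ) ^ (a + b).val = (-1) ^ a.val * (-1) ^ b.val := by
  revert a b; decide

lemma sum_neg_one_pow_mul_add (a b : ZMod 2) :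
    ∑ x1 : ZMod 2, ∑ x2 : ZMod 2, (-1 : ℤ) ^ (x1 * x2 + a * x1 + b * x2).val
      = 2 * (-1) ^ (a * b).val := by
  revert a b; decide

lemma walsh_add_one {n : ℕ} (g : (Fin n → ZMod 2) → ZMod 2) (u : Fin n → ZMod 2) :
    walsh (fun x => g x + 1) u = -walsh g u := by
  simp only [walsh, ← Finset.sum_neg_distrib]
  refine Finset.sum_congr rfl fun x _ => ?_
  rw [add_right_comm, neg_one_pow_val_add _ 1, ZMod.val_one, pow_one, mul_neg_one]

lemma IsBent.add_one {n : ℕ} {g : (Fin n → ZMod 2) → ZMod 2} (hg : IsBent g) :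
    IsBent fun x => g x + 1 := fun u => by
  rw [walsh_add_one, abs_neg, hg]

lemma walsh2_rothaus {n : ℕ} (D P Q : (Fin n → ZMod 2) → ZMod 2)
    (u : Fin n → ZMod 2) (u1 u2 : ZMod 2) :
    walsh2 (fun x x1 x2 => D x + x1 * x2 + P x * x1 + Q x * x2) u u1 u2
      = 2 * walsh (fun x => D x + (P x + u1) * (Q x + u2)) u := by
  simp only [walsh2, walsh, Finset.mul_sum]
  refine Finset.sum_congr rfl fun x _ => ?_
  set L := ∑ i, u i * x i
  have split : ∀ x1 x2 : ZMod 2,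
      D x + x1 * x2 + P x * x1 + Q x * x2 + L + u1 * x1 + u2 * x2
        = (D x + L) + (x1 * x2 + (P x + u1) * x1 + (Q x + u2) * x2) := by
    intro x1 x2; ring
  calc ∑ x1 : ZMod 2, ∑ x2 : ZMod 2,
        (-1 : ℤ) ^ (D x + x1 * x2 + P x * x1 + Q x * x2 + L + u1 * x1 + u2 * x2).val
      = (-1) ^ (D x + L).val * ∑ x1 : ZMod 2, ∑ x2 : ZMod 2,
          (-1 : ℤ) ^ (x1 * x2 + (P x + u1) * x1 + (Q x + u2) * x2).val := by
        simp only [split, neg_one_pow_val_add (D x + L), Finset.mul_sum]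
    _ = 2 * (-1) ^ (D x + (P x + u1) * (Q x + u2) + L).val := by
        rw [sum_neg_one_pow_mul_add, add_right_comm, neg_one_pow_val_add (D x + L)]
        ring

theorem isBent2_rothaus_iff {n : ℕ} (D P Q : (Fin n → ZMod 2) → ZMod 2) :
    IsBent2 (fun x x1 x2 => D x + x1 * x2 + P x * x1 + Q x * x2)
      ↔ ∀ u1 u2, IsBent fun x => D x + (P x + u1) * (Q x + u2) := by
  simp only [IsBent2, IsBent, walsh2_rothaus, abs_mul, abs_two, pow_succ]
  constructor
  · intro h u1 u2 u
    simpa [mul_comm] using h u u1 u2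
  · intro h u u1 u2
    rw [h u1 u2 u, mul_comm]

lemma zmod_two_eq_zero_or_one (a : ZMod 2) : a = 0 ∨ a = 1 := by
  revert a; decide

theorem isBent2_rothaus {n : ℕ} {A B C : (Fin n → ZMod 2) → ZMod 2}
    (hA : IsBent A) (hB : IsBent B) (hC : IsBent C)
    (hABC : IsBent fun x => A x + B x + C x) :
    IsBent2 fun x x1 x2 => A x * B x + A x * C x + B x * C x + x1 * x2
      + (A x + B x) * x1 + (A x + C x) * x2 := by
  refine (isBent2_rothaus_iff _ _ _).2 fun u1 u2 => ?_
  have key : ∀ a b c : ZMod 2,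
      a * b + a * c + b * c + (a + b + 0) * (a + c + 0) = a ∧
      a * b + a * c + b * c + (a + b + 0) * (a + c + 1) = b ∧
      a * b + a * c + b * c + (a + b + 1) * (a + c + 0) = c ∧
      a * b + a * c + b * c + (a + b + 1) * (a + c + 1) = a + b + c + 1 := by
    decide
  rcases zmod_two_eq_zero_or_one u1 with rfl | rfl <;> rcases zmod_two_eq_zero_or_one u2 with rfl | rfl <;>
    simp only [key]
  exacts [hA, hB, hC, hABC.add_one]

theorem isBent2_add_mul_self {n : ℕ} {D : (Fin n → ZMod 2) → ZMod 2} (hD : IsBent D) :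
    IsBent2 fun x x1 x2 => D x + x1 * x2 := by
  have h := (isBent2_rothaus_iff D 0 0).2 fun u1 u2 => ?_
  · simpa using h
  · rcases zmod_two_eq_zero_or_one (u1 * u2) with h | h <;> simp only [Pi.zero_apply, zero_add, h, add_zero]
    exacts [hD, hD.add_one]

theorem stmt16_general {n : ℕ}
    (A B C : (Fin n → ZMod 2) → ZMod 2)
    (hA : IsBent A) (hB : IsBent B) (hC : IsBent C)
    (hABC : IsBent (fun x => A x + B x + C x))
    (hD : IsBent (fun x => A x * B x + A x * C x + B x * C x)) :
    IsBent2 (fun x x1 x2 => A x * B x + A x * C x + B x * C x + x1 * x2 + (A x + B x) * x1 + (A x + C x) * x2) ∧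
    IsBent2 (fun x x1 x2 => A x * B x + A x * C x + B x * C x + x1 * x2 + (B x + C x) * x1 + (A x + B x) * x2) ∧
    IsBent2 (fun x x1 x2 => A x * B x + A x * C x + B x * C x + x1 * x2 + (A x + C x) * x1 + (B x + C x) * x2) ∧
    IsBent2 (fun x x1 x2 => (A x * B x + A x * C x + B x * C x + x1 * x2 + (A x + B x) * x1 + (A x + C x) * x2) + (A x * B x + A x * C x + B x * C x + x1 * x2 + (B x + C x) * x1 + (A x + B x) * x2) + (A x * B x + A x * C x + B x * C x + x1 * x2 + (A x + C x) * x1 + (B x + C x) * x2)) := by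
  have hBCA : IsBent fun x => B x + C x + A x := by convert hABC using 2; ring
  have hCAB : IsBent fun x => C x + A x + B x := by convert hABC using 2; ring
  refine ⟨isBent2_rothaus hA hB hC hABC, ?_, ?_, ?_⟩
  · convert isBent2_rothaus hB hC hA hBCA using 4; ring
  · convert isBent2_rothaus hC hA hB hCAB using 4; ring
  · -- the linear terms in `x1`, `x2` cancel in characteristic 2
    convert isBent2_add_mul_self hD using 4 with x x1 x2
    ring_nf
    reduce_mod_char

theorem stmt16 {n : ℕ} (hn : Even n)
    (A B C : (Fin n → ZMod 2) → ZMod 2)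
    (hA : IsBent A) (hB : IsBent B) (hC : IsBent C)
    (hABC : IsBent (fun x => A x + B x + C x))
    (hD : IsBent (fun x => A x * B x + A x * C x + B x * C x)) :
    IsBent2 (fun x x1 x2 => A x * B x + A x * C x + B x * C x + x1 * x2 + (A x + B x) * x1 + (A x + C x) * x2) ∧
    IsBent2 (fun x x1 x2 => A x * B x + A x * C x + B x * C x + x1 * x2 + (B x + C x) * x1 + (A x + B x) * x2) ∧
    IsBent2 (fun x x1 x2 => A x * B x + A x * C x + B x * C x + x1 * x2 + (A x + C x) * x1 + (B x + C x) * x2) ∧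
    IsBent2 (fun x x1 x2 => (A x * B x + A x * C x + B x * C x + x1 * x2 + (A x + B x) * x1 + (A x + C x) * x2) + (A x * B x + A x * C x + B x * C x + x1 * x2 + (B x + C x) * x1 + (A x + B x) * x2) + (A x * B x + A x * C x + B x * C x + x1 * x2 + (A x + C x) * x1 + (B x + C x) * x2)) :=
  stmt16_general A B C hA hB hC hABC hD
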